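/- arXiv:1504.00273 — 7 statements merged into one kernel-verified Lean document; each statement's English description precedes it below -/
import Mathlib

section
/- Let a and b be positive integers with a ≥ 2. Then there exist infinitely many positive integers N such that a^N − b is composite (i.e., not prime). -/
/-!
If `p = a ^ n - b` is prime and `b < p`, then `p ∤ a`, so by Fermat
`a ^ (n + (p - 1)) ≡ a ^ n ≡ b [MOD p]` and `a ^ (n + (p - 1)) - b` is a proper multiple of `p`.
Thus for every `n` with `2 * b < a ^ n`, one of the exponents `n`, `n + (p - 1)` makes `a ^ N - b`
composite, and such `n` can be taken arbitrarily large.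
-/

namespace Nat

theorem pow_add_sub_one_modEq {p a : ℕ} (hp : p.Prime) (hpa : ¬p ∣ a) (n : ℕ) :
    a ^ (n + (p - 1)) ≡ a ^ n [MOD p] := by
  have hfermat := ModEq.pow_card_sub_one_eq_one hp (hp.coprime_iff_not_dvd.mpr hpa).symm
  simpa [pow_add] using hfermat.mul_left (a ^ n)

theorem pow_sub_not_dvd {a b n : ℕ} (hn : n ≠ 0) (hb : 0 < b) (hbn : 2 * b < a ^ n) :
    ¬(a ^ n - b) ∣ a := by
  intro hdvd
  have hdvd_b : a ^ n - b ∣ b := by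
    simpa [Nat.sub_sub_self (by omega : b ≤ a ^ n)] using
      Nat.dvd_sub (dvd_pow hdvd hn) (dvd_refl (a ^ n - b))
  have := Nat.le_of_dvd hb hdvd_b
  omega

theorem not_prime_pow_add_sub_one_sub {a b n : ℕ} (ha : 2 ≤ a) (hn : n ≠ 0) (hb : 0 < b)
    (hbn : 2 * b < a ^ n) (hp : (a ^ n - b).Prime) :
    ¬(a ^ (n + (a ^ n - b - 1)) - b).Prime := by
  set p := a ^ n - b
  have hmod : b ≡ a ^ (n + (p - 1)) [MOD p] :=
    ((modEq_iff_dvd' (by omega)).mpr dvd_rfl).trans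
      (pow_add_sub_one_modEq hp (pow_sub_not_dvd hn hb hbn) n).symm
  have hgrowth : a ^ n < a ^ (n + (p - 1)) := Nat.pow_lt_pow_right ha (by have := hp.two_le; omega)
  exact not_prime_of_dvd_of_lt ((modEq_iff_dvd' (by omega)).mp hmod) hp.two_le (by omega)

end Nat

theorem stmt_0 (a b : ℕ) (ha : 2 ≤ a) (hb : 1 ≤ b) :
    {N : ℕ | 0 < N ∧ ¬ Nat.Prime (a ^ N - b)}.Infinite := by
  refine Set.infinite_of_forall_exists_gt fun M => ?_
  set n := M + b + 1
  have hbn : 2 * b < a ^ n :=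
    calc 2 * b < 2 ^ (b + 1) := by rw [pow_succ]; have := b.lt_two_pow_self; omega
      _ ≤ 2 ^ n := Nat.pow_le_pow_right two_pos (by omega)
      _ ≤ a ^ n := Nat.pow_le_pow_left ha n
  by_cases hp : (a ^ n - b).Prime
  · exact ⟨_, ⟨by omega, Nat.not_prime_pow_add_sub_one_sub ha (by omega) hb hbn hp⟩, by omega⟩
  · exact ⟨n, ⟨by omega, hp⟩, by omega⟩
end

section
/- For every odd prime p there are infinitely many natural numbers n such that both p^n − 2 and p^n − 4 are not prime. -/
theorem stmt_1 (p : ℕ) (hp : p.Prime) (hodd : Odd p) :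
    {n : ℕ | ¬ Nat.Prime (p ^ n - 2) ∧ ¬ Nat.Prime (p ^ n - 4)}.Infinite := by
  have hp2 : 2 ≤ p := hp.two_le
  have hpne2 : p ≠ 2 := by rintro rfl; exact (Nat.not_odd_iff_even.mpr even_two) hodd
  have hp3 : 3 ≤ p := by omega
  have hpp2 : 9 ≤ p ^ 2 := by nlinarith
  set N := p ^ 2 - 2 with hN
  have hN7 : 7 ≤ N := by omega
  set q := N.minFac with hqdef
  have hq : q.Prime := Nat.minFac_prime (by omega)
  have hqN : q ∣ N := Nat.minFac_dvd N
  have hNodd : Odd N := by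
    obtain ⟨k, hk⟩ := hodd.pow (n := 2)
    exact ⟨k - 1, by omega⟩
  have hqne2 : q ≠ 2 := by
    rintro h2
    rw [h2] at hqN
    obtain ⟨c, hc⟩ := hqN
    obtain ⟨k, hk⟩ := hNodd
    omega
  have hq3 : 3 ≤ q := by have := hq.two_le; omega
  have hqleN : q ≤ N := Nat.le_of_dvd (by omega) hqN
  have hqp : ¬ q ∣ p := by
    intro h
    have h1 : q ∣ p ^ 2 := dvd_pow h (by norm_num)
    have h2 : q ∣ p ^ 2 - N := Nat.dvd_sub h1 hqN
    have : p ^ 2 - N = 2 := by omega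
    rw [this] at h2
    have := Nat.le_of_dvd (by norm_num) h2
    omega
  haveI : Fact q.Prime := ⟨hq⟩
  have hpz : (p : ZMod q) ≠ 0 := by
    rwa [Ne, ZMod.natCast_eq_zero_iff]
  have hsq : (p : ZMod q) ^ 2 = 2 := by
    have h0 : ((N : ℕ) : ZMod q) = 0 := (ZMod.natCast_eq_zero_iff _ _).mpr hqN
    rw [hN, Nat.cast_sub (by omega)] at h0
    push_cast at h0
    linear_combination h0
  have hferm : (p : ZMod q) ^ (q - 1) = 1 := ZMod.pow_card_sub_one_eq_one hpz
  apply Set.infinite_of_injective_forall_mem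
    (f := fun m : ℕ => 2 + (q - 1) * (2 * (m + 1)))
  · intro a b hab
    simp only at hab
    have hab' : (q - 1) * (2 * (a + 1)) = (q - 1) * (2 * (b + 1)) := by omega
    have := Nat.eq_of_mul_eq_mul_left (show 0 < q - 1 by omega) hab'
    omega
  · intro m
    set n := 2 + (q - 1) * (2 * (m + 1)) with hn
    have hmul : 2 * 2 ≤ (q - 1) * (2 * (m + 1)) :=
      Nat.mul_le_mul (by omega) (by omega)
    have hn6 : 6 ≤ n := by omega
    have hpn : p ^ 2 < p ^ n := Nat.pow_lt_pow_right (by omega) (by omega)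
    have hpn2 : q + 2 < p ^ n := by omega
    have hdvd : q ∣ p ^ n - 2 := by
      rw [← ZMod.natCast_eq_zero_iff, Nat.cast_sub (by omega)]
      push_cast
      rw [hn, pow_add, pow_mul, hferm, one_pow, mul_one, hsq]
      ring
    constructor
    · intro hpr
      rcases (hpr.eq_one_or_self_of_dvd q hdvd) with h | h
      · omega
      · omega
    · -- n = 2*k, p^n - 4 = (p^k - 2)(p^k + 2)
      have hk : n = 2 * (1 + (q - 1) * (m + 1)) := by ring
      set k := 1 + (q - 1) * (m + 1) with hkdef
      have hmul2 : 2 * 1 ≤ (q - 1) * (m + 1) := Nat.mul_le_mul (by omega) (by omega)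
      have hk3 : 3 ≤ k := by omega
      have hpk : p ^ 3 ≤ p ^ k := Nat.pow_le_pow_right (by omega) hk3
      have hp27 : 27 ≤ p ^ 3 := by nlinarith
      have hpk4 : 27 ≤ p ^ k := by omega
      have hpow : p ^ n = p ^ k * p ^ k := by rw [hk, two_mul, pow_add]
      have hfac : p ^ n - 4 = (p ^ k - 2) * (p ^ k + 2) := by
        rw [hpow]
        have h2 : 2 ≤ p ^ k := by omega
        zify [show 4 ≤ p ^ k * p ^ k by nlinarith, h2]
        ring
      rw [hfac]
      exact Nat.not_prime_mul (by omega) (by omega)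
end

section
/- Define S(m) for a positive integer m by S(1) = 1 and S(m) = Σ p_i^{α_i} where m = Π p_i^{α_i} is the prime factorization. Then for m, n ≥ 1, the symmetric group S_n contains an element of order m if and only if S(m) ≤ n. -/
/-!
Let `S(m) = ∑_{p ∣ m} p ^ v_p(m)`, so that `S(1) = 0`. The cycle lengths of a permutation
`σ` have lcm `orderOf σ` and sum at most `n`. Since `S(lcm a b) ≤ S(a) + S(b)` and
`S(a) ≤ ∏_{p ∣ a} p ^ v_p(a) = a` (every prime-power part is at least 2), we get
`S(orderOf σ) ≤ n`. Conversely, a permutation whose cycle lengths are exactly the prime-power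
parts `p ^ v_p(m)` moves `S(m)` points and has order their lcm, which is `m` by coprimality.
-/

/-- `Sfun m` is the sum of the maximal prime-power divisors of `m`, with `Sfun 1 = 1`. -/
def Sfun (m : ℕ) : ℕ :=
  if m = 1 then 1 else ∑ p ∈ m.primeFactors, p ^ m.factorization p

theorem Finset.sum_le_prod_of_two_le {ι : Type*} {s : Finset ι} {f : ι → ℕ}
    (hf : ∀ i ∈ s, 2 ≤ f i) : ∑ i ∈ s, f i ≤ ∏ i ∈ s, f i := by
  classical
  induction s using Finset.induction with
  | empty => simp
  | insert a s ha ih =>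
    rw [Finset.sum_insert ha, Finset.prod_insert ha]
    have hs : ∀ i ∈ s, 2 ≤ f i := fun i hi => hf i (Finset.mem_insert_of_mem hi)
    rcases s.eq_empty_or_nonempty with rfl | ⟨i, hi⟩
    · simp
    · have hprod : 2 ≤ ∏ j ∈ s, f j :=
        (hs i hi).trans (Finset.single_le_prod' (fun j hj => one_le_two.trans (hs j hj)) hi)
      calc f a + ∑ j ∈ s, f j ≤ f a + ∏ j ∈ s, f j := by gcongr; exact ih hs
        _ ≤ f a * ∏ j ∈ s, f j := add_le_mul (hf a (Finset.mem_insert_self a s)) hprod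

namespace Nat

def primePowerSum (m : ℕ) : ℕ := ∑ p ∈ m.primeFactors, p ^ m.factorization p

def primePowerParts (m : ℕ) : Multiset ℕ :=
  m.primeFactors.val.map fun p => p ^ m.factorization p

theorem sum_primePowerParts (m : ℕ) : (primePowerParts m).sum = primePowerSum m := rfl

theorem two_le_pow_factorization_of_mem_primeFactors {m p : ℕ} (hp : p ∈ m.primeFactors) :
    2 ≤ p ^ m.factorization p := by
  have hv : m.factorization p ≠ 0 := by
    rwa [← Finsupp.mem_support_iff, support_factorization]
  exact (prime_of_mem_primeFactors hp).two_le.trans (Nat.le_self_pow hv p)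

theorem two_le_of_mem_primePowerParts {m a : ℕ} (ha : a ∈ primePowerParts m) : 2 ≤ a := by
  obtain ⟨p, hp, rfl⟩ := Multiset.mem_map.mp ha
  exact two_le_pow_factorization_of_mem_primeFactors hp

theorem lcm_primePowerParts {m : ℕ} (hm : m ≠ 0) : (primePowerParts m).lcm = m := by
  rw [primePowerParts, ← Finset.lcm_def, Finset.lcm_eq_prod,
    ← prod_primeFactors_pow_factorization hm]
  intro p hp q hq hpq
  exact coprime_pow_primes _ _ (prime_of_mem_primeFactors hp) (prime_of_mem_primeFactors hq) hpq

theorem primePowerSum_le_self {m : ℕ} (hm : m ≠ 0) : primePowerSum m ≤ m :=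
  calc primePowerSum m ≤ ∏ p ∈ m.primeFactors, p ^ m.factorization p :=
        Finset.sum_le_prod_of_two_le fun _ => two_le_pow_factorization_of_mem_primeFactors
    _ = m := (prod_primeFactors_pow_factorization hm).symm

theorem sum_pow_factorization_le_primePowerSum {m n : ℕ} {s : Finset ℕ}
    (hs : ∀ p ∈ s, m.factorization p = n.factorization p ∧ n.factorization p ≠ 0) :
    ∑ p ∈ s, p ^ m.factorization p ≤ primePowerSum n := by
  rw [Finset.sum_congr rfl fun p hp => by rw [(hs p hp).1]]
  refine Finset.sum_le_sum_of_subset fun p hp => ?_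
  rw [← support_factorization, Finsupp.mem_support_iff]
  exact (hs p hp).2

theorem primePowerSum_lcm_le {a b : ℕ} (ha : a ≠ 0) (hb : b ≠ 0) :
    primePowerSum (a.lcm b) ≤ primePowerSum a + primePowerSum b := by
  have hfac (p : ℕ) :
      (a.lcm b).factorization p = max (a.factorization p) (b.factorization p) := by
    rw [factorization_lcm ha hb, Finsupp.sup_apply]
  have hL {p : ℕ} (hp : p ∈ (a.lcm b).primeFactors) :
      a.factorization p ≠ 0 ∨ b.factorization p ≠ 0 := by
    rw [← support_factorization, Finsupp.mem_support_iff, hfac] at hp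
    omega
  -- a prime of `lcm a b` contributes its `a`-part if `v_p(b) ≤ v_p(a)`, its `b`-part otherwise
  rw [primePowerSum,
    ← Finset.sum_filter_add_sum_filter_not _ fun p => b.factorization p ≤ a.factorization p]
  gcongr ?_ + ?_ <;> refine sum_pow_factorization_le_primePowerSum fun p hp => ?_
  all_goals
    obtain ⟨hpL, hcmp⟩ := Finset.mem_filter.mp hp
    have := hL hpL
    have := hfac p
    omega

theorem primePowerSum_lcm_le_sum (T : Multiset ℕ) (hT : 0 ∉ T) :
    primePowerSum T.lcm ≤ T.sum := by
  induction T using Multiset.induction with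
  | empty => simp [primePowerSum]
  | cons a T ih =>
    have ha : a ≠ 0 := fun h => hT (h ▸ Multiset.mem_cons_self a T)
    have hT' : 0 ∉ T := fun h => hT (Multiset.mem_cons_of_mem h)
    rw [Multiset.lcm_cons, lcm_eq_nat_lcm, Multiset.sum_cons]
    calc primePowerSum (a.lcm T.lcm) ≤ primePowerSum a + primePowerSum T.lcm :=
          primePowerSum_lcm_le ha (mt (Multiset.lcm_eq_zero_iff T).mp hT')
      _ ≤ a + T.sum := add_le_add (primePowerSum_le_self ha) (ih hT')

end Nat

theorem Equiv.Perm.exists_orderOf_eq_iff_primePowerSum_le {α : Type*} [Fintype α] [DecidableEq α]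
    {m : ℕ} (hm : m ≠ 0) :
    (∃ σ : Perm α, orderOf σ = m) ↔ m.primePowerSum ≤ Fintype.card α := by
  constructor
  · rintro ⟨σ, rfl⟩
    rw [← σ.lcm_cycleType]
    refine (Nat.primePowerSum_lcm_le_sum _ fun h => ?_).trans σ.sum_cycleType_le
    exact absurd (two_le_of_mem_cycleType h) (by norm_num)
  · intro h
    obtain ⟨σ, hσ⟩ := (exists_with_cycleType_iff α (m := m.primePowerParts)).mpr
      ⟨(Nat.sum_primePowerParts m).trans_le h, fun _ => Nat.two_le_of_mem_primePowerParts⟩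
    exact ⟨σ, by rw [← lcm_cycleType, hσ, Nat.lcm_primePowerParts hm]⟩

theorem Sfun_of_ne_one {m : ℕ} (hm : m ≠ 1) : Sfun m = m.primePowerSum := if_neg hm

theorem stmt_3 (m n : ℕ) (hm : 1 ≤ m) (hn : 1 ≤ n) :
    (∃ σ : Equiv.Perm (Fin n), orderOf σ = m) ↔ Sfun m ≤ n := by
  rcases eq_or_ne m 1 with rfl | hm1
  · exact iff_of_true ⟨1, orderOf_one⟩ (by simpa [Sfun] using hn)
  rw [Sfun_of_ne_one hm1]
  simpa only [Fintype.card_fin] using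
    Equiv.Perm.exists_orderOf_eq_iff_primePowerSum_le (α := Fin n) (Nat.one_le_iff_ne_zero.mp hm)
end

section
/- Let p and q be distinct odd primes with p, q ≤ n. Then the alternating group A_n contains an element of order pq if and only if p + q ≤ n. Moreover, for an odd prime p ≤ n, A_n contains an element of order 2p if and only if p + 4 ≤ n. -/
open Equiv Equiv.Perm Multiset

lemma prime_dvd_multiset_lcm {p : ℕ} (hp : p.Prime) :
    ∀ (m : Multiset ℕ), p ∣ m.lcm → ∃ a ∈ m, p ∣ a := by
  intro m
  induction m using Multiset.induction_on with
  | empty =>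
      intro h
      simp [Multiset.lcm_zero] at h
      exact absurd h (by have := hp.two_le; omega)
  | cons a s ih =>
      intro h
      rw [Multiset.lcm_cons] at h
      have : p ∣ a * s.lcm := h.trans (Nat.lcm_dvd_mul _ _)
      rcases (hp.dvd_mul).mp this with h1 | h2
      · exact ⟨a, Multiset.mem_cons_self a s, h1⟩
      · obtain ⟨b, hb, hpb⟩ := ih h2
        exact ⟨b, Multiset.mem_cons_of_mem hb, hpb⟩

lemma parity_filter (m : Multiset ℕ) :
    (m.sum + Multiset.card m + Multiset.card (m.filter (fun x => 2 ∣ x))) % 2 = 0 := by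
  induction m using Multiset.induction_on with
  | empty => simp
  | cons a s ih =>
      by_cases ha : 2 ∣ a
      · rw [Multiset.filter_cons_of_pos _ (by simpa using ha)]
        simp only [Multiset.sum_cons, Multiset.card_cons]
        omega
      · rw [Multiset.filter_cons_of_neg _ (by simpa using ha)]
        simp only [Multiset.sum_cons, Multiset.card_cons]
        omega


lemma exists_alt_of_cycleType (n : ℕ) (m : Multiset ℕ)
    (hsum : m.sum ≤ n) (h2 : ∀ a ∈ m, 2 ≤ a)
    (heven : Even (m.sum + Multiset.card m)) :
    ∃ σ : alternatingGroup (Fin n), orderOf σ = m.lcm := by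
  obtain ⟨g, hg⟩ := (Equiv.Perm.exists_with_cycleType_iff (Fin n)).mpr
    ⟨by simpa using hsum, h2⟩
  have hsign : Equiv.Perm.sign g = 1 := by
    rw [Equiv.Perm.sign_of_cycleType, hg]
    exact heven.neg_one_pow
  refine ⟨⟨g, Equiv.Perm.mem_alternatingGroup.mpr hsign⟩, ?_⟩
  rw [Subgroup.orderOf_mk, ← Equiv.Perm.lcm_cycleType, hg]

lemma bound_pq (n p q : ℕ) (hp : p.Prime) (hq : q.Prime) (hpq : p ≠ q)
    (σ : Equiv.Perm (Fin n)) (h : orderOf σ = p * q) : p + q ≤ n := by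
  set m := σ.cycleType with hm
  have hlcm : m.lcm = p * q := by rw [hm, Equiv.Perm.lcm_cycleType, h]
  have hsum : m.sum ≤ n := by
    rw [hm, Equiv.Perm.sum_cycleType]
    simpa using σ.support.card_le_univ
  have hp2 := hp.two_le
  have hq2 := hq.two_le
  obtain ⟨a, ha, hpa⟩ := prime_dvd_multiset_lcm hp m (hlcm ▸ dvd_mul_right p q)
  have ha2 : 2 ≤ a := Equiv.Perm.two_le_of_mem_cycleType (hm ▸ ha)
  by_cases hqa : q ∣ a
  · have hdvd : p * q ∣ a :=
      Nat.Coprime.mul_dvd_of_dvd_of_dvd ((Nat.coprime_primes hp hq).mpr hpq) hpa hqa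
    have h1 : p * q ≤ a := Nat.le_of_dvd (by omega) hdvd
    have h2 : a ≤ m.sum := Multiset.single_le_sum (fun x _ => Nat.zero_le x) a ha
    nlinarith
  · have hql : q ∣ (m.erase a).lcm := by
      have h1 : q ∣ GCDMonoid.lcm a (m.erase a).lcm := by
        rw [← Multiset.lcm_cons, Multiset.cons_erase ha, hlcm]
        exact dvd_mul_left q p
      rw [lcm_eq_nat_lcm] at h1
      rcases hq.dvd_mul.mp (h1.trans (Nat.lcm_dvd_mul _ _)) with h | h
      · exact absurd h hqa
      · exact h
    obtain ⟨b, hb, hqb⟩ := prime_dvd_multiset_lcm hq _ hql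
    have hb2 : 2 ≤ b := Equiv.Perm.two_le_of_mem_cycleType (hm ▸ Multiset.mem_of_mem_erase hb)
    have hpa' : p ≤ a := Nat.le_of_dvd (by omega) hpa
    have hqb' : q ≤ b := Nat.le_of_dvd (by omega) hqb
    have hab : a + b ≤ m.sum := by
      rw [← Multiset.cons_erase ha, Multiset.sum_cons]
      exact Nat.add_le_add_left (Multiset.single_le_sum (fun x _ => Nat.zero_le x) b hb) a
    omega

lemma bound_2p (n p : ℕ) (hp : p.Prime) (hodd : Odd p)
    (σ : Equiv.Perm (Fin n)) (hsign : Equiv.Perm.sign σ = 1) (h : orderOf σ = 2 * p) :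
    p + 4 ≤ n := by
  set m := σ.cycleType with hm
  have hlcm : m.lcm = 2 * p := by rw [hm, Equiv.Perm.lcm_cycleType, h]
  have hsum : m.sum ≤ n := by
    rw [hm, Equiv.Perm.sum_cycleType]
    simpa using σ.support.card_le_univ
  have hp2 := hp.two_le
  have hpodd : ¬ 2 ∣ p := by rcases hodd with ⟨k, hk⟩; omega
  have hcop : Nat.Coprime 2 p := (Nat.coprime_primes Nat.prime_two hp).mpr (by omega)
  obtain ⟨a, ha, h2a⟩ := prime_dvd_multiset_lcm Nat.prime_two m (hlcm ▸ dvd_mul_right 2 p)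
  have ha2 : 2 ≤ a := Equiv.Perm.two_le_of_mem_cycleType (hm ▸ ha)
  have hEvenSC : Even (m.sum + Multiset.card m) := by
    have hs := Equiv.Perm.sign_of_cycleType σ
    rw [hsign, ← hm] at hs
    exact (neg_one_pow_eq_one_iff_even (by decide : (-1 : ℤˣ) ≠ 1)).mp hs.symm
  have hfilter : Even (Multiset.card (m.filter (fun x => 2 ∣ x))) := by
    have hpf := parity_filter m
    rw [Nat.even_iff] at hEvenSC ⊢
    omega
  have haf : a ∈ m.filter (fun x => 2 ∣ x) := Multiset.mem_filter.mpr ⟨ha, h2a⟩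
  have hcard : 2 ≤ Multiset.card (m.filter (fun x => 2 ∣ x)) := by
    have h1 : 0 < Multiset.card (m.filter (fun x => 2 ∣ x)) :=
      Multiset.card_pos_iff_exists_mem.mpr ⟨a, haf⟩
    rw [Nat.even_iff] at hfilter
    omega
  obtain ⟨b, hbf⟩ : ∃ b, b ∈ (m.filter (fun x => 2 ∣ x)).erase a := by
    have hpos : 0 < Multiset.card ((m.filter (fun x => 2 ∣ x)).erase a) := by
      rw [Multiset.card_erase_of_mem haf, Nat.pred_eq_sub_one]; omega
    exact Multiset.exists_mem_of_ne_zero (fun h0 => by simp [h0] at hpos)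
  have hbm : b ∈ m.erase a :=
    Multiset.mem_of_le (Multiset.erase_le_erase a (Multiset.filter_le _ m)) hbf
  have h2b : 2 ∣ b := (Multiset.mem_filter.mp (Multiset.mem_of_mem_erase hbf)).2
  have hb2 : 2 ≤ b :=
    Equiv.Perm.two_le_of_mem_cycleType (hm ▸ Multiset.mem_of_mem_erase hbm)
  have hab : a + b + ((m.erase a).erase b).sum = m.sum := by
    rw [add_assoc, ← Multiset.sum_cons, ← Multiset.sum_cons, Multiset.cons_erase hbm,
      Multiset.cons_erase ha]
  by_cases hpa : p ∣ a
  · have hdvd : 2 * p ∣ a := Nat.Coprime.mul_dvd_of_dvd_of_dvd hcop h2a hpa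
    have h1 : 2 * p ≤ a := Nat.le_of_dvd (by omega) hdvd
    omega
  · by_cases hpb : p ∣ b
    · have hdvd : 2 * p ∣ b := Nat.Coprime.mul_dvd_of_dvd_of_dvd hcop h2b hpb
      have h1 : 2 * p ≤ b := Nat.le_of_dvd (by omega) hdvd
      omega
    · have h1 : p ∣ (m.erase a).lcm := by
        have hx : p ∣ GCDMonoid.lcm a (m.erase a).lcm := by
          rw [← Multiset.lcm_cons, Multiset.cons_erase ha, hlcm]
          exact dvd_mul_left p 2
        rw [lcm_eq_nat_lcm] at hx
        rcases hp.dvd_mul.mp (hx.trans (Nat.lcm_dvd_mul _ _)) with hh | hh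
        · exact absurd hh hpa
        · exact hh
      have h2 : p ∣ ((m.erase a).erase b).lcm := by
        have hx : p ∣ GCDMonoid.lcm b ((m.erase a).erase b).lcm := by
          rw [← Multiset.lcm_cons, Multiset.cons_erase hbm]
          exact h1
        rw [lcm_eq_nat_lcm] at hx
        rcases hp.dvd_mul.mp (hx.trans (Nat.lcm_dvd_mul _ _)) with hh | hh
        · exact absurd hh hpb
        · exact hh
      obtain ⟨c, hc, hpc⟩ := prime_dvd_multiset_lcm hp _ h2
      have hc2 : 2 ≤ c := Equiv.Perm.two_le_of_mem_cycleType
        (hm ▸ Multiset.mem_of_mem_erase (Multiset.mem_of_mem_erase hc))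
      have hcp : p ≤ c := Nat.le_of_dvd (by omega) hpc
      have hcs : c ≤ ((m.erase a).erase b).sum :=
        Multiset.single_le_sum (fun x _ => Nat.zero_le x) c hc
      omega

theorem stmt_6 (n : ℕ) :
    (∀ p q : ℕ, p.Prime → q.Prime → Odd p → Odd q → p ≠ q → p ≤ n → q ≤ n →
      ((∃ σ : alternatingGroup (Fin n), orderOf σ = p * q) ↔ p + q ≤ n)) ∧
    (∀ p : ℕ, p.Prime → Odd p → p ≤ n →
      ((∃ σ : alternatingGroup (Fin n), orderOf σ = 2 * p) ↔ p + 4 ≤ n)) := by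
  constructor
  · intro p q hp hq hop hoq hne hpn hqn
    constructor
    · rintro ⟨⟨g, hg⟩, horder⟩
      rw [Subgroup.orderOf_mk] at horder
      exact bound_pq n p q hp hq hne g horder
    · intro hle
      have hps : ({p, q} : Multiset ℕ).sum = p + q := by simp
      obtain ⟨σ, hσ⟩ := exists_alt_of_cycleType n {p, q} (by simpa [hps])
        (by
          intro a hamem
          rcases Multiset.mem_cons.mp hamem with rfl | hamem
          · exact hp.two_le
          · rw [Multiset.mem_singleton] at hamem; subst hamem; exact hq.two_le)
        (by
          rcases hop with ⟨k, hk⟩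
          rcases hoq with ⟨l, hl⟩
          rw [hps]
          simp only [Multiset.insert_eq_cons, Multiset.card_cons, Multiset.card_singleton]
          exact ⟨k + l + 2, by omega⟩)
      refine ⟨σ, ?_⟩
      rw [hσ]
      have : ({p, q} : Multiset ℕ).lcm = Nat.lcm p q := by
        simp [Multiset.insert_eq_cons, Multiset.lcm_cons, Multiset.lcm_singleton,
          lcm_eq_nat_lcm]
      rw [this, Nat.Coprime.lcm_eq_mul ((Nat.coprime_primes hp hq).mpr hne)]
  · intro p hp hop hpn
    constructor
    · rintro ⟨⟨g, hg⟩, horder⟩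
      rw [Subgroup.orderOf_mk] at horder
      exact bound_2p n p hp hop g (Equiv.Perm.mem_alternatingGroup.mp hg) horder
    · intro hle
      have hps : ({p, 2, 2} : Multiset ℕ).sum = p + 4 := by simp
      obtain ⟨σ, hσ⟩ := exists_alt_of_cycleType n {p, 2, 2} (by simpa [hps])
        (by
          intro a hamem
          simp only [Multiset.insert_eq_cons, Multiset.mem_cons, Multiset.mem_singleton] at hamem
          rcases hamem with rfl | rfl | rfl
          · exact hp.two_le
          · exact le_rfl
          · exact le_rfl)
        (by
          rcases hop with ⟨k, hk⟩
          rw [hps]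
          simp only [Multiset.insert_eq_cons, Multiset.card_cons, Multiset.card_singleton]
          exact ⟨k + 4, by omega⟩)
      refine ⟨σ, ?_⟩
      rw [hσ]
      have hcop : Nat.Coprime 2 p :=
        (Nat.coprime_primes Nat.prime_two hp).mpr (by rcases hop with ⟨k, hk⟩; omega)
      have : ({p, 2, 2} : Multiset ℕ).lcm = Nat.lcm p 2 := by
        simp [Multiset.insert_eq_cons, Multiset.lcm_cons, Multiset.lcm_singleton,
          lcm_eq_nat_lcm, Nat.lcm_self]
      rw [this, Nat.lcm_comm, Nat.Coprime.lcm_eq_mul hcop]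
end

section
/- Let n > 6 be odd with both n and n − 2 composite. Then for all primes p, q ≤ n − 1 with p ≠ q, there is an element of order pq in S_n if and only if there is one in S_{n−1}; moreover the prime divisors of n! and (n−1)! coincide. -/
lemma multiset_prime_dvd_lcm {p : ℕ} (hp : p.Prime) (s : Multiset ℕ) (h : p ∣ s.lcm) :
    ∃ a ∈ s, p ∣ a := by
  induction s using Multiset.induction with
  | empty => rw [Multiset.lcm_zero] at h; exact absurd (Nat.dvd_one.mp h) hp.ne_one
  | cons a t ih =>
    rw [Multiset.lcm_cons] at h
    have : p ∣ a * t.lcm := h.trans (Nat.lcm_dvd_mul _ _)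
    rcases hp.dvd_mul.mp this with h' | h'
    · exact ⟨a, Multiset.mem_cons_self a t, h'⟩
    · obtain ⟨b, hb, hb'⟩ := ih h'
      exact ⟨b, Multiset.mem_cons_of_mem hb, hb'⟩

lemma key (m p q : ℕ) (hp : p.Prime) (hq : q.Prime) (hpq : p ≠ q) :
    (∃ σ : Equiv.Perm (Fin m), orderOf σ = p * q) ↔ p + q ≤ m := by
  constructor
  · rintro ⟨σ, hσ⟩
    have hlcm := Equiv.Perm.lcm_cycleType σ
    rw [hσ] at hlcm
    have hsum : σ.cycleType.sum ≤ m := by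
      have := σ.sum_cycleType ▸ (σ.support.card_le_univ)
      simpa using this
    obtain ⟨a, ha, hpa⟩ := multiset_prime_dvd_lcm hp σ.cycleType (hlcm ▸ Dvd.intro q rfl)
    obtain ⟨b, hb, hqb⟩ := multiset_prime_dvd_lcm hq σ.cycleType (hlcm ▸ Dvd.intro_left p rfl)
    have ha2 : 2 ≤ a := Equiv.Perm.two_le_of_mem_cycleType ha
    have hb2 : 2 ≤ b := Equiv.Perm.two_le_of_mem_cycleType hb
    have hpa' : p ≤ a := Nat.le_of_dvd (by omega) hpa
    have hqb' : q ≤ b := Nat.le_of_dvd (by omega) hqb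
    by_cases hab : a = b
    · have hpqa : p * q ∣ a := (Nat.Coprime.mul_dvd_of_dvd_of_dvd
        ((Nat.coprime_primes hp hq).mpr hpq) hpa (hab ▸ hqb))
      have : p * q ≤ a := Nat.le_of_dvd (by omega) hpqa
      have hle : a ≤ σ.cycleType.sum := Multiset.le_sum_of_mem ha
      have := hp.two_le; have := hq.two_le
      nlinarith
    · have hb' : b ∈ σ.cycleType.erase a := (Multiset.mem_erase_of_ne (Ne.symm hab)).mpr hb
      have : a + b ≤ σ.cycleType.sum := by
        have hcons : a ::ₘ σ.cycleType.erase a = σ.cycleType := Multiset.cons_erase ha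
        have hle : b ≤ (σ.cycleType.erase a).sum := Multiset.le_sum_of_mem hb'
        have : σ.cycleType.sum = a + (σ.cycleType.erase a).sum := by
          conv_lhs => rw [← hcons]
          rw [Multiset.sum_cons]
        omega
      omega
  · intro h
    obtain ⟨g, hg⟩ := (Equiv.Perm.exists_with_cycleType_iff (Fin m) (m := {p, q})).mpr
      ⟨by simpa using h, by
        intro a ha
        simp only [Multiset.insert_eq_cons, Multiset.mem_cons, Multiset.mem_singleton] at ha
        rcases ha with rfl | rfl
        exacts [hp.two_le, hq.two_le]⟩
    refine ⟨g, ?_⟩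
    rw [← Equiv.Perm.lcm_cycleType, hg]
    rw [Multiset.insert_eq_cons, Multiset.lcm_cons, Multiset.lcm_singleton,
      normalize_eq, lcm_eq_nat_lcm,
      Nat.Coprime.lcm_eq_mul ((Nat.coprime_primes hp hq).mpr hpq)]

theorem stmt_8 (n : ℕ) (hn : 6 < n) (hodd : Odd n)
    (h1 : ¬ Nat.Prime n) (h2 : ¬ Nat.Prime (n - 2)) :
    (∀ p q : ℕ, p.Prime → q.Prime → p ≠ q → p ≤ n - 1 → q ≤ n - 1 →
      ((∃ σ : Equiv.Perm (Fin n), orderOf σ = p * q) ↔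
        (∃ σ : Equiv.Perm (Fin (n - 1)), orderOf σ = p * q))) ∧
    (n.factorial.primeFactors = (n - 1).factorial.primeFactors) := by
  constructor
  · intro p q hp hq hpq _ _
    rw [key n p q hp hq hpq, key (n-1) p q hp hq hpq]
    constructor
    · intro h
      have hne : p + q ≠ n := by
        intro he
        by_cases hp2 : p = 2
        · exact h2 (by rw [← he, hp2]; simpa using hq)
        · by_cases hq2 : q = 2
          · exact h2 (by rw [← he, hq2]; simpa using hp)
          · obtain ⟨k, hk⟩ := hp.odd_of_ne_two hp2
            obtain ⟨l, hl⟩ := hq.odd_of_ne_two hq2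
            obtain ⟨m, hm⟩ := hodd
            omega
      omega
    · intro h; omega
  · ext p
    by_cases hp : p.Prime
    · simp only [Nat.mem_primeFactors, Nat.factorial_ne_zero, ne_eq, not_false_eq_true,
        and_true, hp, true_and, Nat.Prime.dvd_factorial hp]
      have : p ≠ n := fun h => h1 (h ▸ hp)
      omega
    · simp [Nat.mem_primeFactors, hp]
end

section
/- Let n > 6 with both n and n − 2 prime or with n even. If the strong Goldbach conjecture holds, then the prime graphs of S_n and S_{n−1} differ: either some prime divides n! but not (n−1)!, or there exist distinct primes p, q ≤ n − 1 with p + q = n. -/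
theorem stmt_9 (n : ℕ) (hn : 6 < n)
    (hcase : (Nat.Prime n ∧ Nat.Prime (n - 2)) ∨ Even n)
    (hSGC : ∀ m : ℕ, Even m → 6 < m →
      ∃ p q : ℕ, p.Prime ∧ q.Prime ∧ Odd p ∧ Odd q ∧ p ≠ q ∧ p + q = m) :
    (∃ p : ℕ, p.Prime ∧ p ∣ n.factorial ∧ ¬ p ∣ (n - 1).factorial) ∨
    (∃ p q : ℕ, p.Prime ∧ q.Prime ∧ p ≠ q ∧ p ≤ n - 1 ∧ q ≤ n - 1 ∧ p + q = n) := by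
  rcases hcase with ⟨hp, _⟩ | he
  · left
    refine ⟨n, hp, Nat.dvd_factorial hp.pos le_rfl, ?_⟩
    intro hdvd
    have := (Nat.Prime.dvd_factorial hp).mp hdvd
    omega
  · right
    obtain ⟨p, q, hp, hq, hop, hoq, hne, hpq⟩ := hSGC n he hn
    have hp2 := hp.two_le
    have hq2 := hq.two_le
    obtain ⟨a, ha⟩ := hop
    obtain ⟨b, hb⟩ := hoq
    exact ⟨p, q, hp, hq, hne, by omega, by omega, hpq⟩
end

section
/- Let G be a finite group with a central subgroup D and a normal subgroup C containing D such that C/D is a nonabelian simple group whose Schur multiplier is trivial (or, more weakly, such that C′ ∩ D = 1). Then C′ is a normal subgroup of G isomorphic to C/D and C = D × C′. -/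
theorem stmt_18 {G : Type*} [Group G] [Finite G] (D C : Subgroup G)
    (hD : D ≤ Subgroup.center G) (hDC : D ≤ C) [C.Normal]
    [hDn : (D.subgroupOf C).Normal]
    (hsimple : IsSimpleGroup (C ⧸ D.subgroupOf C))
    (hnonab : ¬ ∀ a b : C ⧸ D.subgroupOf C, a * b = b * a)
    (hint : ⁅C, C⁆ ⊓ D = ⊥) :
    (⁅C, C⁆ : Subgroup G).Normal ∧
    Nonempty ((⁅C, C⁆ : Subgroup G) ≃* (C ⧸ D.subgroupOf C)) ∧
    D ⊔ ⁅C, C⁆ = C ∧ D ⊓ ⁅C, C⁆ = ⊥ := by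
  -- notation
  set D' := D.subgroupOf C with hD'
  let π : C →* C ⧸ D' := QuotientGroup.mk' D'
  have hπker : π.ker = D' := QuotientGroup.ker_mk' D'
  have hπsurj : Function.Surjective π := QuotientGroup.mk'_surjective D'
  -- commutator of quotient is top
  have hcomm_top : (⁅(⊤ : Subgroup (C ⧸ D')), ⊤⁆ : Subgroup (C ⧸ D')) = ⊤ := by
    rcases hsimple.eq_bot_or_eq_top_of_normal ⁅(⊤ : Subgroup (C ⧸ D')), ⊤⁆ inferInstance with h | h
    · exfalso
      apply hnonab
      intro a b
      have := Subgroup.commutator_eq_bot_iff_le_centralizer.mp h (Subgroup.mem_top a)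
      have := (Subgroup.mem_centralizer_iff.mp this) b (Subgroup.mem_top b)
      exact this.symm
    · exact h
  -- ⁅C,C⁆ as image of abstract commutator
  have hmap_top : Subgroup.map C.subtype ⊤ = C := by
    rw [← MonoidHom.range_eq_map, Subgroup.range_subtype]
  have hCC : (⁅C, C⁆ : Subgroup G) = Subgroup.map C.subtype ⁅(⊤ : Subgroup C), ⊤⁆ := by
    rw [Subgroup.map_commutator, hmap_top]
  -- image of abstract commutator under π is top
  have hmapπ : Subgroup.map π ⁅(⊤ : Subgroup C), ⊤⁆ = ⊤ := by
    rw [Subgroup.map_commutator]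
    rw [Subgroup.map_top_of_surjective π hπsurj]
    exact hcomm_top
  -- D' ⊔ commutator = ⊤ in C
  have hsup : D' ⊔ (⁅(⊤ : Subgroup C), ⊤⁆ : Subgroup C) = ⊤ := by
    have := Subgroup.comap_map_eq π ⁅(⊤ : Subgroup C), ⊤⁆
    rw [hmapπ, Subgroup.comap_top, hπker] at this
    rw [sup_comm]
    exact this.symm
  -- intersection in C is bot
  have hintC : (⁅(⊤ : Subgroup C), ⊤⁆ : Subgroup C) ⊓ D' = ⊥ := by
    have hinj := C.subtype_injective
    apply Subgroup.map_injective hinj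
    rw [Subgroup.map_inf_eq _ _ _ hinj, Subgroup.map_bot, ← hCC,
      hD', Subgroup.subgroupOf_map_subtype, ← inf_assoc, hint, bot_inf_eq]
  refine ⟨inferInstance, ?_, ?_, ?_⟩
  · -- isomorphism: restrict π to commutator
    have e1 : (⁅C, C⁆ : Subgroup G) ≃* (⁅(⊤ : Subgroup C), ⊤⁆ : Subgroup C) := by
      rw [hCC]
      exact (Subgroup.equivMapOfInjective _ _ C.subtype_injective).symm
    let f : (⁅(⊤ : Subgroup C), ⊤⁆ : Subgroup C) →* C ⧸ D' :=
      π.comp (Subgroup.subtype _)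
    have hfinj : Function.Injective f := by
      rw [← MonoidHom.ker_eq_bot_iff]
      have : f.ker = (π.ker.subgroupOf _) := by
        ext x; simp [f, Subgroup.mem_subgroupOf, MonoidHom.mem_ker]
      rw [this, hπker]
      rw [Subgroup.subgroupOf_eq_bot ]
      rw [disjoint_iff, inf_comm, hintC]
    have hfsurj : Function.Surjective f := by
      intro y
      have : y ∈ Subgroup.map π ⁅(⊤ : Subgroup C), ⊤⁆ := by rw [hmapπ]; trivial
      obtain ⟨x, hx, hxy⟩ := this
      exact ⟨⟨x, hx⟩, hxy⟩
    exact ⟨e1.trans (MulEquiv.ofBijective f ⟨hfinj, hfsurj⟩)⟩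
  · -- sup
    have := congrArg (Subgroup.map C.subtype) hsup
    rw [Subgroup.map_sup, hmap_top, hD', Subgroup.subgroupOf_map_subtype,
      inf_of_le_left hDC, ← hCC] at this
    exact this
  · rw [inf_comm]; exact hint
end
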